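/- Let n, m ≥ 2 with m even, and let T be any deterministic decision tree computing g_{n,m}. Then for every function ℓ : [m] → [n], when the computation of T on the input x^ℓ reaches its output leaf (which is labeled 0, since x^ℓ is a 0-input), either at least m/2 of the cells queried along the way have value 0, or the total number of cells queried exceeds n(m−1) − 2m. -/

import Mathlib

open Classical
open scoped ENNReal

set_option maxHeartbeats 1000000

/-! ### Deterministic decision trees -/

inductive DTree (ι σ : Type) : Type
  | leaf (b : Bool) : DTree ι σ
  | node (v : ι) (child : σ → DTree ι σ) : DTree ι σ

namespace DTree

variable {ι σ : Type}

/-- The output of the decision tree on input `x`. -/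
def eval (x : ι → σ) : DTree ι σ → Bool
  | leaf b => b
  | node v child => (child (x v)).eval x

/-- The list of variables queried by the decision tree on input `x`,
in the order they are queried. -/
def queryList (x : ι → σ) : DTree ι σ → List ι
  | leaf _ => []
  | node v child => v :: (child (x v)).queryList x

/-- The cost of the decision tree on input `x`: the number of internal nodes visited. -/
def cost (T : DTree ι σ) (x : ι → σ) : ℕ := (T.queryList x).length

/-- `T` computes `f` if it outputs `f x` on every input `x`. -/
def Computes (T : DTree ι σ) (f : (ι → σ) → Bool) : Prop := ∀ x, T.eval x = f x

end DTree

/-- Deterministic query complexity. -/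
noncomputable def detComplexity {ι σ : Type} (f : (ι → σ) → Bool) : ℕ :=
  sInf {d : ℕ | ∃ T : DTree ι σ, T.Computes f ∧ ∀ x, T.cost x ≤ d}

/-- Expected cost of a randomized decision tree (a distribution over deterministic
decision trees) on input `x`. -/
noncomputable def expCost {ι σ : Type} (μ : PMF (DTree ι σ)) (x : ι → σ) : ℝ≥0∞ :=
  ∑' T : DTree ι σ, μ T * (T.cost x : ℝ≥0∞)

/-- Zero-error (Las Vegas) randomized query complexity. -/
noncomputable def R0query {ι σ : Type} (f : (ι → σ) → Bool) : ℝ≥0∞ :=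
  ⨅ μ ∈ {μ : PMF (DTree ι σ) | ∀ T ∈ μ.support, T.Computes f},
    ⨆ x : ι → σ, expCost μ x

/-- One-sided error randomized query complexity. -/
noncomputable def R1query {ι σ : Type} (f : (ι → σ) → Bool) : ℝ≥0∞ :=
  ⨅ μ ∈ {μ : PMF (DTree ι σ) |
      (∀ x, f x = false → ∀ T ∈ μ.support, T.eval x = false) ∧
      (∀ x, f x = true → 1 / 2 ≤ ∑' T : DTree ι σ, if T.eval x = true then μ T else 0)},
    ⨆ x : ι → σ, expCost μ x

/-- Bounded-error (Monte Carlo) randomized query complexity. -/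
noncomputable def Rquery {ι σ : Type} (f : (ι → σ) → Bool) : ℝ≥0∞ :=
  ⨅ μ ∈ {μ : PMF (DTree ι σ) |
      ∀ x, 9 / 10 ≤ ∑' T : DTree ι σ, if T.eval x = f x then μ T else 0},
    ⨆ x : ι → σ, expCost μ x
/-! ### Quantum query algorithms -/

/-- The standard quantum query oracle `O_x |j,p⟩|w⟩ = |j, p + x_j mod S⟩|w⟩`,
as a matrix. -/
noncomputable def qOracle {V ω : Type} [DecidableEq V] [DecidableEq ω] {S : ℕ}
    (x : V → Fin S) : Matrix (V × Fin S × ω) (V × Fin S × ω) ℂ :=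
  fun r c => if r = (c.1, c.2.1 + x c.1, c.2.2) then 1 else 0

/-- A quantum query algorithm on inputs `x : V → Fin S`, making `queries` queries, with
workspace `Fin (W+1)`, alternating the unitaries `U 0, …, U queries` with the oracle,
and measuring with the projector `P` at the end. -/
structure QAlg (V : Type) [Fintype V] [DecidableEq V] (S : ℕ) [NeZero S] where
  queries : ℕ
  W : ℕ
  init : V
  U : ℕ → Matrix (V × Fin S × Fin (W + 1)) (V × Fin S × Fin (W + 1)) ℂ
  hU : ∀ t, (U t).conjTranspose * U t = 1 ∧ U t * (U t).conjTranspose = 1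
  P : Matrix (V × Fin S × Fin (W + 1)) (V × Fin S × Fin (W + 1)) ℂ
  hP : P.conjTranspose = P ∧ P * P = P

namespace QAlg

variable {V : Type} [Fintype V] [DecidableEq V] {S : ℕ} [NeZero S]

/-- The state of the quantum algorithm after `t` steps on input `x`. -/
noncomputable def state (A : QAlg V S) (x : V → Fin S) :
    ℕ → (V × Fin S × Fin (A.W + 1) → ℂ)
  | 0 => (A.U 0).mulVec fun r => if r = (A.init, 0, 0) then 1 else 0
  | t + 1 => (A.U (t + 1)).mulVec ((qOracle x).mulVec (A.state x t))

/-- The probability that the algorithm accepts input `x`: `‖P |Ψ_x⟩‖²`. -/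
noncomputable def acceptProb (A : QAlg V S) (x : V → Fin S) : ℝ :=
  ∑ r : V × Fin S × Fin (A.W + 1), Complex.normSq (A.P.mulVec (A.state x A.queries) r)

end QAlg

/-- Bounded-error quantum query complexity (for functions over a finite input
alphabet `σ`, identified with `Fin (card σ)` via a fixed bijection). -/
noncomputable def Qquery {V σ : Type} [Fintype V] [DecidableEq V] [Fintype σ] [Nonempty σ]
    (f : (V → σ) → Bool) : ℕ :=
  letI : NeZero (Fintype.card σ) := ⟨Fintype.card_ne_zero⟩
  sInf {t : ℕ | ∃ A : QAlg V (Fintype.card σ), A.queries = t ∧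
    ∀ x : V → σ,
      (f x = true → 9 / 10 ≤ A.acceptProb fun j => Fintype.equivFin σ (x j)) ∧
      (f x = false → A.acceptProb (fun j => Fintype.equivFin σ (x j)) ≤ 1 / 10)}

/-- Exact quantum query complexity. -/
noncomputable def QEquery {V σ : Type} [Fintype V] [DecidableEq V] [Fintype σ] [Nonempty σ]
    (f : (V → σ) → Bool) : ℕ :=
  letI : NeZero (Fintype.card σ) := ⟨Fintype.card_ne_zero⟩
  sInf {t : ℕ | ∃ A : QAlg V (Fintype.card σ), A.queries = t ∧
    ∀ x : V → σ,
      (f x = true → A.acceptProb (fun j => Fintype.equivFin σ (x j)) = 1) ∧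
      (f x = false → A.acceptProb (fun j => Fintype.equivFin σ (x j)) = 0)}

/-- Approximate degree of a boolean function. -/
noncomputable def adeg {ι : Type} (F : (ι → Bool) → Bool) : ℕ :=
  sInf {d : ℕ | ∃ p : MvPolynomial ι ℝ, p.totalDegree ≤ d ∧
    ∀ y : ι → Bool, |MvPolynomial.eval (fun i => if y i then (1 : ℝ) else 0) p -
      (if F y then 1 else 0)| ≤ 1 / 10}
/-! ### The pointer functions of Göös–Pitassi–Watson type -/

/-- A symbol of the input alphabet: a boolean value, a left pointer, a right pointer,
and a back/internal pointer (to a cell or a column, depending on `β`). -/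
structure PSym (n m : ℕ) (β : Type) where
  val : Bool
  lp : Option (Fin n × Fin m)
  rp : Option (Fin n × Fin m)
  bp : Option β
deriving DecidableEq

/-- The all-ones symbol `(1,⊥,⊥,⊥)`. -/
def PSym.one (n m : ℕ) (β : Type) : PSym n m β := ⟨true, none, none, none⟩

/-- The symbol `(0,⊥,⊥,⊥)`. -/
def PSym.zero (n m : ℕ) (β : Type) : PSym n m β := ⟨false, none, none, none⟩

def PSym.equivProd (n m : ℕ) (β : Type) :
    PSym n m β ≃ Bool × Option (Fin n × Fin m) × Option (Fin n × Fin m) × Option β where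
  toFun v := (v.val, v.lp, v.rp, v.bp)
  invFun p := ⟨p.1, p.2.1, p.2.2.1, p.2.2.2⟩
  left_inv _ := rfl
  right_inv _ := rfl

instance {n m : ℕ} {β : Type} [Fintype β] : Fintype (PSym n m β) :=
  Fintype.ofEquiv _ (PSym.equivProd n m β).symm

instance {n m : ℕ} {β : Type} : Nonempty (PSym n m β) := ⟨PSym.one n m β⟩

/-- The sequence of k bits of `j`, most significant first:  the root-to-leaf path
(`false` = left, `true` = right) of the `j`-th leaf in the complete binary tree of depth `k`. -/
def bitsPath (k j : ℕ) : List Bool :=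
  ((List.range k).reverse).map fun i => j.testBit i

/-- The root-to-leaf path of the leaf labeled `j` (0-indexed) in the balanced binary tree
with `m` leaves: the complete binary tree if `m` is a power of 2, and otherwise the complete
binary tree on `2 ^ ⌊log₂ m⌋` leaves with a pair of children added to each of the
`m - 2 ^ ⌊log₂ m⌋` leftmost leaves. -/
def treePath (m j : ℕ) : List Bool :=
  if m - 2 ^ Nat.log 2 m = 0 then bitsPath (Nat.log 2 m) j
  else if j < 2 * (m - 2 ^ Nat.log 2 m) then
    bitsPath (Nat.log 2 m) (j / 2) ++ [j % 2 == 1]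
  else bitsPath (Nat.log 2 m) (j - (m - 2 ^ Nat.log 2 m))

/-- Starting at cell `a` and following the left/right pointers of `x` as prescribed by the
list `p` of moves (`false` = left pointer, `true` = right pointer); returns `none` if a
null pointer is encountered. -/
def followPath {n m : ℕ} {β : Type} (x : Fin n × Fin m → PSym n m β)
    (a : Fin n × Fin m) (p : List Bool) : Option (Fin n × Fin m) :=
  p.foldl (fun acc b => acc.bind fun c => if b then (x c).rp else (x c).lp) (some a)

/-- The conditions for `x` to be a 1-input of `f_{n,m}`, with marked column `b` and special
element `a`: (1) `b` is the unique all-1 column; (2) `a` is the unique cell of column `b`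
with `x_a ≠ (1,⊥,⊥,⊥)`; (3) for every column `j ≠ b` the tree path from `a` to the leaf
labeled `j` exists, and ends at a cell `ℓ_j` of column `j` holding a 0; (4) the back pointer
of each `ℓ_j` points to the column `b`. -/
def fCond (n m : ℕ) (x : Fin n × Fin m → PSym n m (Fin m))
    (b : Fin m) (a : Fin n × Fin m) : Prop :=
  (∀ j : Fin m, (∀ i : Fin n, (x (i, j)).val = true) ↔ j = b) ∧
  a.2 = b ∧
  (∀ i : Fin n, x (i, b) ≠ PSym.one n m (Fin m) ↔ (i, b) = a) ∧
  ∀ j : Fin m, j ≠ b →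
    ∃ ℓ : Fin n × Fin m, followPath x a (treePath m j.1) = some ℓ ∧
      ℓ.2 = j ∧ (x ℓ).val = false ∧ (x ℓ).bp = some b

/-- The pointer function `f_{n,m}`, with back pointers to the marked column. -/
noncomputable def fFun (n m : ℕ) (x : Fin n × Fin m → PSym n m (Fin m)) : Bool :=
  if ∃ b a, fCond n m x b a then true else false

/-- The conditions for `x` to be a 1-input of `g_{n,m}`, with marked column `b` and special
element `a`: (1)–(3) as for `f_{n,m}`, and (4′) the set of columns `j ≠ b` whose highlighted
zero `ℓ_j` has back pointer to `a` has size exactly `m/2`. -/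
def gCond (n m : ℕ) (x : Fin n × Fin m → PSym n m (Fin n × Fin m))
    (b : Fin m) (a : Fin n × Fin m) : Prop :=
  (∀ j : Fin m, (∀ i : Fin n, (x (i, j)).val = true) ↔ j = b) ∧
  a.2 = b ∧
  (∀ i : Fin n, x (i, b) ≠ PSym.one n m (Fin n × Fin m) ↔ (i, b) = a) ∧
  (∀ j : Fin m, j ≠ b →
    ∃ ℓ : Fin n × Fin m, followPath x a (treePath m j.1) = some ℓ ∧
      ℓ.2 = j ∧ (x ℓ).val = false) ∧
  {j : Fin m | j ≠ b ∧ ∃ ℓ : Fin n × Fin m,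
      followPath x a (treePath m j.1) = some ℓ ∧ (x ℓ).bp = some a}.ncard = m / 2

/-- The pointer function `g_{n,m}`, where exactly `m/2` of the highlighted zeroes point
back to the special element. -/
noncomputable def gFun (n m : ℕ) (x : Fin n × Fin m → PSym n m (Fin n × Fin m)) : Bool :=
  if ∃ b a, gCond n m x b a then true else false

/-- Column `j` is good in `x` (for `g_{n,m}`): `x` is a 1-input with marked column `b ≠ j`
and special element `a`, and the highlighted zero of column `j` points back to `a`. -/
def goodColumn (n m : ℕ) (x : Fin n × Fin m → PSym n m (Fin n × Fin m)) (j : Fin m) : Prop :=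
  ∃ b a, gCond n m x b a ∧ j ≠ b ∧
    ∃ ℓ : Fin n × Fin m, followPath x a (treePath m j.1) = some ℓ ∧ (x ℓ).bp = some a

/-- The conditions for `x` to be a 1-input of `h_{k,n,m}`, with marked columns `b 0,…,b (k-1)`
and special elements `a 0,…,a (k-1)`: (1) the `b s` are exactly the all-1 columns; (2) `a s` is
the unique cell of column `b s` with `x_{a s} ≠ (1,⊥,⊥,⊥)`; (3) the internal pointers of the
`a s` form a cycle and all the `a s` have equal left pointers and equal right pointers;
(4) for every non-marked column `j` the tree path from any `a s` to the leaf labeled `j`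
exists and ends at a cell `ℓ_j` of column `j` holding a 0. -/
def hCond (k n m : ℕ) (x : Fin n × Fin m → PSym n m (Fin n × Fin m))
    (b : Fin k → Fin m) (a : Fin k → Fin n × Fin m) : Prop :=
  Function.Injective b ∧
  (∀ j : Fin m, (∀ i : Fin n, (x (i, j)).val = true) ↔ ∃ s, b s = j) ∧
  (∀ s, (a s).2 = b s) ∧
  (∀ s, ∀ i : Fin n, x (i, b s) ≠ PSym.one n m (Fin n × Fin m) ↔ (i, b s) = a s) ∧
  (∀ s : Fin k, (x (a s)).bp = some (a ⟨(s.1 + 1) % k, Nat.mod_lt _ s.pos⟩)) ∧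
  (∀ s t : Fin k, (x (a s)).lp = (x (a t)).lp ∧ (x (a s)).rp = (x (a t)).rp) ∧
  ∀ j : Fin m, (∀ s, b s ≠ j) → ∀ s : Fin k,
    ∃ ℓ : Fin n × Fin m, followPath x (a s) (treePath m j.1) = some ℓ ∧
      ℓ.2 = j ∧ (x ℓ).val = false

/-- The pointer function `h_{k,n,m}` with `k` marked columns and no back pointers. -/
noncomputable def hFun (k n m : ℕ) (x : Fin n × Fin m → PSym n m (Fin n × Fin m)) : Bool :=
  if ∃ b a, hCond k n m x b a then true else false

/-- The hard input `x^ℓ`: cell `(i,j)` holds `(0,⊥,⊥,⊥)` if `i = ℓ j` and `(1,⊥,⊥,⊥)`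
otherwise. -/
def xhard (n m : ℕ) (β : Type) (ℓ : Fin m → Fin n) : Fin n × Fin m → PSym n m β :=
  fun c => if c.1 = ℓ c.2 then PSym.zero n m β else PSym.one n m β

/-- The set of (distinct) cells queried among the first `t` queries of `T` on input `x`. -/
def queriedUpTo {ι σ : Type} [DecidableEq ι] (T : DTree ι σ) (x : ι → σ) (t : ℕ) :
    Finset ι :=
  ((T.queryList x).take t).toFinset
/-! ### The progress measure for the hard distribution `x^ℓ` -/

/-- Column `j` is compromised (for the input `x^ℓ`), given the set `Q` of queried cells:
the zero cell `(ℓ j, j)` has been queried, or more than `n/2` cells of column `j` have been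
queried. -/
def compromisedCol (n m : ℕ) (ℓ : Fin m → Fin n) (Q : Finset (Fin n × Fin m))
    (j : Fin m) : Prop :=
  (ℓ j, j) ∈ Q ∨ n < 2 * (Q.filter fun c => c.2 = j).card

/-- The progress measure `I_t = A_t + (2/n)·B_t` of the decision tree `T` on the input `x^ℓ`
after `t` queries, where `A_t` is the number of compromised columns and `B_t` is the number
of queried cells lying outside compromised columns. -/
noncomputable def Imeasure (n m : ℕ)
    (T : DTree (Fin n × Fin m) (PSym n m (Fin n × Fin m))) (ℓ : Fin m → Fin n) (t : ℕ) : ℝ :=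
  ({j : Fin m |
      compromisedCol n m ℓ (queriedUpTo T (xhard n m (Fin n × Fin m) ℓ) t) j}.ncard : ℝ) +
    (2 / n) * ({c : Fin n × Fin m | c ∈ queriedUpTo T (xhard n m (Fin n × Fin m) ℓ) t ∧
      ¬ compromisedCol n m ℓ (queriedUpTo T (xhard n m (Fin n × Fin m) ℓ) t) c.2}.ncard : ℝ)
/-! ### The balanced binary tree, via root-to-node paths -/

/-- The node set of the balanced binary tree with `m` leaves: each node is identified with
the left/right path from the root to it, so the nodes are exactly the prefixes of the
root-to-leaf paths. -/
def treeNodes (m : ℕ) : Finset (List Bool) :=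
  (Finset.range m).biUnion fun j => (treePath m j).inits.toFinset

/-- The leaves of the balanced binary tree with `m` leaves. -/
def leafNodes (m : ℕ) : Finset (List Bool) :=
  (Finset.range m).image fun j => treePath m j

/-- The internal nodes of the balanced binary tree with `m` leaves. -/
def internalNodes (m : ℕ) : Finset (List Bool) :=
  treeNodes m \ leafNodes m

/-- The subtree rooted at a node `u`: all nodes of which `u` is a prefix. -/
def subtreeOf (m : ℕ) (u : List Bool) : Finset (List Bool) :=
  (treeNodes m).filter fun w => u <+: w

/-! ### The hard distribution for `h_{1,n,m}` -/

/-- A parameter quadruple `(v, π, ℓᴸ, ℓᴺ)` for the hard distribution: a bit `v`, a map `π`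
from internal tree nodes to columns, and row maps `ℓᴸ, ℓᴺ` for leaves resp. internal nodes. -/
abbrev HardQ (n m : ℕ) : Type :=
  Bool × ({u : List Bool // u ∈ internalNodes m} → Fin m) × (Fin m → Fin n) × (Fin m → Fin n)

/-- The valid parameter quadruples: `π` injective and `ℓᴸ j ≠ ℓᴺ j` for all `j`. -/
noncomputable def hardSet (n m : ℕ) : Finset (HardQ n m) :=
  Finset.univ.filter fun q => Function.Injective q.2.1 ∧ ∀ j, q.2.2.1 j ≠ q.2.2.2 j

/-- The column of the root of the tree (`none` if the tree has no internal node). -/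
noncomputable def rootCol (n m : ℕ) (q : HardQ n m) : Option (Fin m) :=
  if h : ([] : List Bool) ∈ internalNodes m then some (q.2.1 ⟨[], h⟩) else none

/-- The cell where a child node `w` of an internal node is placed: internal nodes go to
cell `(ℓᴺ (π w), π w)`, the leaf labeled `j` goes to cell `(ℓᴸ j, j)`, and the removed leaf
(the one labeled by the root's column) yields a null pointer. -/
noncomputable def childCell (n m : ℕ) (q : HardQ n m) (w : List Bool) :
    Option (Fin n × Fin m) :=
  if h : w ∈ internalNodes m then some (q.2.2.2 (q.2.1 ⟨w, h⟩), q.2.1 ⟨w, h⟩)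
  else if h2 : ∃ j : Fin m, w = treePath m j.1 ∧ some j ≠ rootCol n m q then
    some (q.2.2.1 (Classical.choose h2), Classical.choose h2)
  else none

/-- The input of the hard distribution determined by the parameter quadruple `q`:
the internal node `u` of the tree is placed at cell `(ℓᴺ (π u), π u)` with left and right
pointers to the cells of its children, value `v` and a self-loop internal pointer if `u` is
the root, and value 0 otherwise; for `j ≠ π(root)`, the leaf labeled `j` is placed at cell
`(ℓᴸ j, j)` with value 0 and null pointers; all the remaining cells hold `(1,⊥,⊥,⊥)`. -/
noncomputable def hardInput (n m : ℕ) (q : HardQ n m) :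
    Fin n × Fin m → PSym n m (Fin n × Fin m) :=
  fun c =>
    if h : ∃ u : {u : List Bool // u ∈ internalNodes m}, q.2.1 u = c.2 ∧ q.2.2.2 c.2 = c.1 then
      { val := if (Classical.choose h).1 = [] then q.1 else false
        lp := childCell n m q ((Classical.choose h).1 ++ [false])
        rp := childCell n m q ((Classical.choose h).1 ++ [true])
        bp := if (Classical.choose h).1 = [] then some c else none }
    else if some c.2 ≠ rootCol n m q ∧ c.1 = q.2.2.1 c.2 then PSym.zero n m (Fin n × Fin m)
    else PSym.one n m (Fin n × Fin m)

/-- Column `j` directly satisfies (i) or (ii): one of the cells `(ℓᴸ j, j)`, `(ℓᴺ j, j)` has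
been queried, or more than half of the cells of column `j` have been queried. -/
def colBad (n m : ℕ) (q : HardQ n m) (Q : Finset (Fin n × Fin m)) (j : Fin m) : Prop :=
  (q.2.2.1 j, j) ∈ Q ∨ (q.2.2.2 j, j) ∈ Q ∨ n < 2 * (Q.filter fun c => c.2 = j).card

/-- Column `j` is compromised: it satisfies (i) or (ii), or some ancestor `u` of `π⁻¹(j)`
in the tree is such that column `π u` satisfies (i) or (ii). -/
def compromisedCol19 (n m : ℕ) (q : HardQ n m) (Q : Finset (Fin n × Fin m))
    (j : Fin m) : Prop :=
  colBad n m q Q j ∨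
  ∃ w u : {u : List Bool // u ∈ internalNodes m}, q.2.1 w = j ∧
    u.1 <+: w.1 ∧ u.1 ≠ w.1 ∧ colBad n m q Q (q.2.1 u)

/-- The progress measure `I_t = min{A_t + (4·C0·log₂ m / n)·B_t, m/2}` of the decision tree
`D` on the hard-distribution input given by `q` after `t` queries, where `A_t` is the number
of compromised columns and `B_t` the number of queried cells outside compromised columns. -/
noncomputable def Imeasure19 (n m : ℕ) (C0 : ℝ)
    (D : DTree (Fin n × Fin m) (PSym n m (Fin n × Fin m))) (q : HardQ n m) (t : ℕ) : ℝ :=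
  min
    (({j : Fin m | compromisedCol19 n m q (queriedUpTo D (hardInput n m q) t) j}.ncard : ℝ) +
      (4 * C0 * Real.logb 2 m / n) *
        ({c : Fin n × Fin m | c ∈ queriedUpTo D (hardInput n m q) t ∧
          ¬ compromisedCol19 n m q (queriedUpTo D (hardInput n m q) t) c.2}.ncard : ℝ))
    (m / 2)

/-! Adversary argument. Suppose that on `x^ℓ` the tree queries a set `Q` of at most
`n(m-1) - 2m` cells containing fewer than `m/2` zeros. Then some column `b` and `m/2` further
columns `S` have unqueried zeros, and at least `m` cells lie outside `Q`, column `b` and the zeros.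
The balanced tree has `m - 1` internal nodes (in heap numbering they are exactly `1, …, m-1`), so
it can be planted on the grid: root at `(ℓ b, b)`, the other internal nodes on free cells, the
leaf labeled `j` on the zero `(ℓ j, j)`, with the leaves of `S` pointing back to the root. This is
a 1-input of `g_{n,m}` that agrees with `x^ℓ` on `Q`, so the tree answers the same on both. -/

lemma DTree.eval_eq_of_forall_mem_queryList {ι σ : Type} (T : DTree ι σ) {x y : ι → σ}
    (h : ∀ v ∈ T.queryList x, y v = x v) : T.eval y = T.eval x := by
  induction T with
  | leaf => rfl
  | node v child ih =>
    have hv : y v = x v := h v List.mem_cons_self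
    simp only [DTree.eval, hv]
    exact ih (x v) fun w hw => h w (List.mem_cons_of_mem v hw)

def heapIndex (l : List Bool) : ℕ := l.foldl (fun a b => Nat.bit b a) 1

@[simp] lemma heapIndex_nil : heapIndex [] = 1 := rfl

@[simp] lemma heapIndex_append_singleton (l : List Bool) (b : Bool) :
    heapIndex (l ++ [b]) = Nat.bit b (heapIndex l) := by
  simp [heapIndex, List.foldl_append]

lemma heapIndex_pos (l : List Bool) : 0 < heapIndex l := by
  induction l using List.reverseRecOn with
  | nil => simp
  | append_singleton l b ih => rw [heapIndex_append_singleton, Nat.bit_val]; omega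

lemma two_pow_length_mul_heapIndex_le (u v : List Bool) :
    2 ^ v.length * heapIndex u ≤ heapIndex (u ++ v) := by
  induction v using List.reverseRecOn with
  | nil => simp
  | append_singleton v b ih =>
    rw [← List.append_assoc, heapIndex_append_singleton, Nat.bit_val, List.length_append,
      List.length_singleton, pow_succ]
    nlinarith

lemma heapIndex_injective : Function.Injective heapIndex := by
  have ne_nil (l : List Bool) (b : Bool) : heapIndex (l ++ [b]) ≠ heapIndex [] := by
    have := heapIndex_pos l
    rw [heapIndex_append_singleton, Nat.bit_val, heapIndex_nil]
    omega
  intro l₁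
  induction l₁ using List.reverseRecOn with
  | nil =>
    intro l₂ h
    rcases l₂.eq_nil_or_concat with rfl | ⟨l₂, b₂, rfl⟩
    · rfl
    · exact absurd h.symm (by simpa using ne_nil l₂ b₂)
  | append_singleton l₁ b₁ ih =>
    intro l₂ h
    rcases l₂.eq_nil_or_concat with rfl | ⟨l₂, b₂, rfl⟩
    · exact absurd h (ne_nil l₁ b₁)
    · rw [List.concat_eq_append, heapIndex_append_singleton, heapIndex_append_singleton,
        Nat.bit_val, Nat.bit_val] at h
      obtain ⟨rfl, hl⟩ : b₁ = b₂ ∧ heapIndex l₁ = heapIndex l₂ := by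
        cases b₁ <;> cases b₂ <;> simp at h ⊢ <;> omega
      rw [List.concat_eq_append, ih hl]

lemma two_mul_heapIndex_le_of_prefix {u w : List Bool} (h : u <+: w) (hne : u ≠ w) :
    2 * heapIndex u ≤ heapIndex w := by
  obtain ⟨v, rfl⟩ := h
  have hv : v ≠ [] := by rintro rfl; simp at hne
  calc 2 * heapIndex u ≤ 2 ^ v.length * heapIndex u := by
        gcongr
        exact Nat.le_self_pow (by simpa using hv) 2
    _ ≤ heapIndex (u ++ v) := two_pow_length_mul_heapIndex_le u v

lemma bitsPath_succ (k j : ℕ) : bitsPath (k + 1) j = j.testBit k :: bitsPath k j := by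
  simp [bitsPath, List.range_succ]

lemma heapIndex_bitsPath {k j : ℕ} (hj : j < 2 ^ k) :
    heapIndex (bitsPath k j) = 2 ^ k + j := by
  suffices h : ∀ a, (bitsPath k j).foldl (fun a b => Nat.bit b a) a = a * 2 ^ k + j % 2 ^ k by
    rw [heapIndex, h, one_mul, Nat.mod_eq_of_lt hj]
  clear hj
  induction k with
  | zero => simp [bitsPath, Nat.mod_one]
  | succ k ih =>
    intro a
    have hmod : j % 2 ^ (k + 1) = j % 2 ^ k + 2 ^ k * (j / 2 ^ k % 2) := by
      rw [pow_succ, Nat.mod_mul]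
    rw [bitsPath_succ, List.foldl_cons, ih, Nat.bit_val, Nat.toNat_testBit, hmod, pow_succ]
    ring

lemma two_mul_sub_two_pow_log_lt {m : ℕ} (hm : 0 < m) : 2 * (m - 2 ^ Nat.log 2 m) < m := by
  have hlow : 2 ^ Nat.log 2 m ≤ m := Nat.pow_log_le_self 2 hm.ne'
  have hhigh : m < 2 ^ (Nat.log 2 m + 1) := Nat.lt_pow_succ_log_self (by norm_num) m
  rw [pow_succ] at hhigh
  omega

lemma heapIndex_treePath {m j : ℕ} (hj : j < m) :
    heapIndex (treePath m j) + 2 * (m - 2 ^ Nat.log 2 m) =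
      if j < 2 * (m - 2 ^ Nat.log 2 m) then 2 * m + j else m + j := by
  have hlow : 2 ^ Nat.log 2 m ≤ m := Nat.pow_log_le_self 2 (by omega)
  have hr := two_mul_sub_two_pow_log_lt (by omega : 0 < m)
  have hbits {i : ℕ} (hi : i < 2 ^ Nat.log 2 m) := heapIndex_bitsPath hi
  unfold treePath
  split_ifs with hr0 hj2 hj2
  · rw [hbits (i := j) (by omega)]; omega
  · rw [hbits (i := j) (by omega)]; omega
  · rw [heapIndex_append_singleton, Nat.bit_val, hbits (i := j / 2) (by omega)]
    rcases Nat.mod_two_eq_zero_or_one j with h | h <;> simp [h] <;> omega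
  · rw [hbits (i := j - (m - 2 ^ Nat.log 2 m)) (by omega)]; omega

lemma heapIndex_treePath_mem {m j : ℕ} (hj : j < m) :
    heapIndex (treePath m j) ∈ Finset.Ico m (2 * m) := by
  have := heapIndex_treePath hj
  have := two_mul_sub_two_pow_log_lt (by omega : 0 < m)
  rw [Finset.mem_Ico]
  split_ifs at * <;> omega

lemma treePath_injOn (m : ℕ) : Set.InjOn (treePath m) (Set.Iio m) := by
  intro j₁ hj₁ j₂ hj₂ h
  rw [Set.mem_Iio] at hj₁ hj₂
  have h₁ := heapIndex_treePath (m := m) hj₁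
  have h₂ := heapIndex_treePath (m := m) hj₂
  have := two_mul_sub_two_pow_log_lt (by omega : 0 < m)
  rw [h] at h₁
  split_ifs at h₁ h₂ <;> omega

lemma treePath_prefix_eq {m j₁ j₂ : ℕ} (hj₁ : j₁ < m) (hj₂ : j₂ < m)
    (h : treePath m j₁ <+: treePath m j₂) : j₁ = j₂ := by
  have h₁ := Finset.mem_Ico.mp (heapIndex_treePath_mem hj₁)
  have h₂ := Finset.mem_Ico.mp (heapIndex_treePath_mem hj₂)
  by_cases he : treePath m j₁ = treePath m j₂
  · exact treePath_injOn m hj₁ hj₂ he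
  · have := two_mul_heapIndex_le_of_prefix h he
    omega

lemma treePath_ne_nil {m j : ℕ} (hm : 2 ≤ m) (hj : j < m) : treePath m j ≠ [] := by
  intro h
  have := Finset.mem_Ico.mp (heapIndex_treePath_mem hj)
  rw [h, heapIndex_nil] at this
  omega

lemma mem_treeNodes_iff {m : ℕ} {u : List Bool} :
    u ∈ treeNodes m ↔ ∃ j < m, u <+: treePath m j := by
  simp [treeNodes, List.mem_inits]

lemma mem_internalNodes_iff {m : ℕ} {u : List Bool} :
    u ∈ internalNodes m ↔ ∃ j < m, u <+: treePath m j ∧ u ≠ treePath m j := by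
  simp only [internalNodes, leafNodes, Finset.mem_sdiff, mem_treeNodes_iff, Finset.mem_image,
    Finset.mem_range, not_exists, not_and]
  constructor
  · rintro ⟨⟨j, hj, hu⟩, hleaf⟩
    exact ⟨j, hj, hu, fun h => hleaf j hj h.symm⟩
  · rintro ⟨j, hj, hu, hne⟩
    refine ⟨⟨j, hj, hu⟩, fun j' hj' h => hne ?_⟩
    subst h
    rw [treePath_prefix_eq hj' hj hu]

lemma heapIndex_mem_of_mem_internalNodes {m : ℕ} {u : List Bool} (hu : u ∈ internalNodes m) :
    heapIndex u ∈ Finset.Ico 1 m := by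
  obtain ⟨j, hj, hpre, hne⟩ := mem_internalNodes_iff.mp hu
  have := two_mul_heapIndex_le_of_prefix hpre hne
  have := Finset.mem_Ico.mp (heapIndex_treePath_mem hj)
  have := heapIndex_pos u
  rw [Finset.mem_Ico]
  omega

lemma card_internalNodes_le (m : ℕ) : (internalNodes m).card ≤ m - 1 := by
  simpa using Finset.card_le_card_of_injOn heapIndex
    (fun _ hu => heapIndex_mem_of_mem_internalNodes hu) heapIndex_injective.injOn

lemma mem_internalNodes_of_append_mem_treeNodes {m : ℕ} {u : List Bool} {d : Bool}
    (h : u ++ [d] ∈ treeNodes m) : u ∈ internalNodes m := by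
  obtain ⟨j, hj, hpre⟩ := mem_treeNodes_iff.mp h
  refine mem_internalNodes_iff.mpr ⟨j, hj, (List.prefix_append u [d]).trans hpre, ?_⟩
  rintro rfl
  simpa using hpre.length_le

lemma treePath_notMem_internalNodes {m j : ℕ} (hj : j < m) :
    treePath m j ∉ internalNodes m :=
  fun h => (Finset.mem_sdiff.mp h).2 (Finset.mem_image_of_mem _ (Finset.mem_range.mpr hj))

lemma followPath_append_singleton {n m : ℕ} {β : Type} (x : Fin n × Fin m → PSym n m β)
    (a : Fin n × Fin m) (p : List Bool) (d : Bool) :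
    followPath x a (p ++ [d]) =
      (followPath x a p).bind fun c => if d then (x c).rp else (x c).lp := by
  simp [followPath, List.foldl_append]

lemma gFun_xhard (n m : ℕ) (ℓ : Fin m → Fin n) :
    gFun n m (xhard n m (Fin n × Fin m) ℓ) = false := by
  rw [gFun, if_neg]
  rintro ⟨b, a, hcol, -⟩
  simpa [xhard, PSym.zero] using (hcol b).mpr rfl (ℓ b)

section PlantedInput

variable {n m : ℕ} (ℓ : Fin m → Fin n) (b : Fin m)
  (φ : {u : List Bool // u ∈ (internalNodes m).erase []} → Fin n × Fin m) (S : Finset (Fin m))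

noncomputable def nodeCell (w : List Bool) : Option (Fin n × Fin m) :=
  if h : w ∈ (internalNodes m).erase [] then some (φ ⟨w, h⟩)
  else if w = [] then some (ℓ b, b)
  else if h : ∃ j : Fin m, treePath m j = w then some (ℓ h.choose, h.choose)
  else none

/-- The tree laid out in the grid with its root at `(ℓ b, b)`, the other internal nodes at the
cells `φ u` and the leaf labeled `j` at the zero `(ℓ j, j)` of column `j`; the leaves of the
columns in `S` point back to the root. On all other cells the input is `x^ℓ`. -/
noncomputable def plantedInput : Fin n × Fin m → PSym n m (Fin n × Fin m) := fun c =>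
  if c = (ℓ b, b) then
    ⟨true, nodeCell ℓ b φ [false], nodeCell ℓ b φ [true], some (ℓ b, b)⟩
  else if h : ∃ u, φ u = c then
    ⟨false, nodeCell ℓ b φ (h.choose.1 ++ [false]), nodeCell ℓ b φ (h.choose.1 ++ [true]),
      none⟩
  else if c.1 = ℓ c.2 then ⟨false, none, none, if c.2 ∈ S then some (ℓ b, b) else none⟩
  else PSym.one n m _

structure IsTreePlacement : Prop where
  injective : Function.Injective φ
  col_ne : ∀ u, (φ u).2 ≠ b
  ne_zero : ∀ u j, φ u ≠ (ℓ j, j)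

variable {ℓ b φ S}

lemma nodeCell_nil : nodeCell ℓ b φ [] = some (ℓ b, b) := by
  rw [nodeCell, dif_neg (Finset.notMem_erase _ _), if_pos rfl]

lemma nodeCell_of_mem {w : List Bool} (hw : w ∈ internalNodes m) (hne : w ≠ []) :
    nodeCell ℓ b φ w = some (φ ⟨w, Finset.mem_erase.mpr ⟨hne, hw⟩⟩) := by
  rw [nodeCell, dif_pos]

lemma nodeCell_treePath (hm : 2 ≤ m) (j : Fin m) :
    nodeCell ℓ b φ (treePath m j) = some (ℓ j, j) := by
  have hleaf : ∃ j' : Fin m, treePath m j' = treePath m j := ⟨j, rfl⟩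
  have hchoose : hleaf.choose = j :=
    Fin.ext (treePath_injOn m hleaf.choose.isLt j.isLt hleaf.choose_spec)
  rw [nodeCell, dif_neg fun h => treePath_notMem_internalNodes j.isLt (Finset.mem_of_mem_erase h),
    if_neg (treePath_ne_nil hm j.isLt), dif_pos hleaf, hchoose]

lemma plantedInput_root :
    plantedInput ℓ b φ S (ℓ b, b) =
      ⟨true, nodeCell ℓ b φ [false], nodeCell ℓ b φ [true], some (ℓ b, b)⟩ :=
  if_pos rfl

lemma plantedInput_node (hφ : IsTreePlacement ℓ b φ) (u) :
    plantedInput ℓ b φ S (φ u) =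
      ⟨false, nodeCell ℓ b φ (u.1 ++ [false]), nodeCell ℓ b φ (u.1 ++ [true]), none⟩ := by
  have hu : ∃ u', φ u' = φ u := ⟨u, rfl⟩
  rw [plantedInput, if_neg fun h => hφ.col_ne u (by rw [h]), dif_pos hu,
    hφ.injective hu.choose_spec]

lemma plantedInput_leaf (hφ : IsTreePlacement ℓ b φ) {j : Fin m} (hj : j ≠ b) :
    plantedInput ℓ b φ S (ℓ j, j) =
      ⟨false, none, none, if j ∈ S then some (ℓ b, b) else none⟩ := by
  rw [plantedInput, if_neg fun h => hj (congrArg Prod.snd h),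
    dif_neg fun ⟨u, hu⟩ => hφ.ne_zero u j hu, if_pos rfl]

lemma plantedInput_eq_xhard {c : Fin n × Fin m} (hcb : c ≠ (ℓ b, b)) (hcφ : ∀ u, φ u ≠ c)
    (hcS : ∀ j ∈ S, c ≠ (ℓ j, j)) : plantedInput ℓ b φ S c = xhard n m _ ℓ c := by
  rw [plantedInput, if_neg hcb, dif_neg fun ⟨u, hu⟩ => hcφ u hu, xhard]
  split_ifs with hc hS
  · exact absurd (Prod.ext hc rfl : c = (ℓ c.2, c.2)) (hcS c.2 hS)
  · rfl
  · rfl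

lemma plantedInput_column_of_ne (hφ : IsTreePlacement ℓ b φ) (hbS : b ∉ S) {i : Fin n}
    (hi : i ≠ ℓ b) : plantedInput ℓ b φ S (i, b) = PSym.one n m _ := by
  rw [plantedInput_eq_xhard (fun h => hi (congrArg Prod.fst h))
    (fun u h => hφ.col_ne u (by rw [h]))
    (fun j hj h => hbS (by rwa [show b = j from congrArg Prod.snd h])), xhard, if_neg hi]

lemma followPath_plantedInput (hφ : IsTreePlacement ℓ b φ) {w : List Bool}
    (hw : w ∈ treeNodes m) :
    followPath (plantedInput ℓ b φ S) (ℓ b, b) w = nodeCell ℓ b φ w := by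
  induction w using List.reverseRecOn with
  | nil => rw [nodeCell_nil]; rfl
  | append_singleton u d ih =>
    have hu := mem_internalNodes_of_append_mem_treeNodes hw
    rw [followPath_append_singleton, ih (Finset.mem_sdiff.mp hu).1]
    by_cases hnil : u = []
    · subst hnil
      rw [nodeCell_nil, Option.bind_some, plantedInput_root]
      cases d <;> rfl
    · rw [nodeCell_of_mem hu hnil, Option.bind_some, plantedInput_node hφ]
      cases d <;> rfl

lemma followPath_plantedInput_treePath (hm : 2 ≤ m) (hφ : IsTreePlacement ℓ b φ) (j : Fin m) :
    followPath (plantedInput ℓ b φ S) (ℓ b, b) (treePath m j) = some (ℓ j, j) := by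
  rw [followPath_plantedInput hφ (mem_treeNodes_iff.mpr ⟨j, j.isLt, List.prefix_rfl⟩),
    nodeCell_treePath hm]

lemma gCond_plantedInput (hm : 2 ≤ m) (hφ : IsTreePlacement ℓ b φ) (hbS : b ∉ S)
    (hS : S.card = m / 2) :
    gCond n m (plantedInput ℓ b φ S) b (ℓ b, b) := by
  have hpath := followPath_plantedInput_treePath (S := S) hm hφ
  refine ⟨fun j => ⟨fun hcol => ?_, ?_⟩, rfl, fun i => ⟨fun hi => ?_, ?_⟩,
    fun j hj => ⟨(ℓ j, j), hpath j, rfl, by rw [plantedInput_leaf hφ hj]⟩, ?_⟩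
  · by_contra hj
    simpa [plantedInput_leaf hφ hj] using hcol (ℓ j)
  · rintro rfl i
    by_cases hi : i = ℓ j
    · rw [hi, plantedInput_root]
    · rw [plantedInput_column_of_ne hφ hbS hi]; rfl
  · by_contra h
    exact hi (plantedInput_column_of_ne hφ hbS fun he => h (by rw [he]))
  · rintro ⟨⟩
    simp [plantedInput_root, PSym.one]
  · convert Set.ncard_coe_finset S
    · ext j
      simp only [Set.mem_ofPred_eq, Finset.mem_coe, hpath, Option.some.injEq, exists_eq_left']
      constructor
      · rintro ⟨hj, hbp⟩
        simpa [plantedInput_leaf hφ hj] using hbp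
      · intro hj
        have hjb : j ≠ b := fun h => hbS (h ▸ hj)
        simp [plantedInput_leaf hφ hjb, hj, hjb]
    · exact hS.symm

lemma gFun_plantedInput (hm : 2 ≤ m) (hφ : IsTreePlacement ℓ b φ) (hbS : b ∉ S)
    (hS : S.card = m / 2) :
    gFun n m (plantedInput ℓ b φ S) = true :=
  if_pos ⟨b, (ℓ b, b), gCond_plantedInput hm hφ hbS hS⟩

end PlantedInput

lemma exists_notMem_subset_card_eq {α : Type*} [Fintype α] (Z : Finset α) {k : ℕ}
    (h : Z.card + k < Fintype.card α) :
    ∃ b ∉ Z, ∃ S : Finset α, S.card = k ∧ b ∉ S ∧ Disjoint S Z := by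
  have hcompl : k < Zᶜ.card := by rw [Finset.card_compl]; omega
  obtain ⟨b, hb⟩ := Finset.card_pos.mp (by omega : 0 < Zᶜ.card)
  obtain ⟨S, hSsub, hS⟩ := Finset.exists_subset_card_eq
    (show k ≤ (Zᶜ.erase b).card by rw [Finset.card_erase_of_mem hb]; omega)
  refine ⟨b, Finset.mem_compl.mp hb, S, hS, fun h => (Finset.mem_erase.mp (hSsub h)).1 rfl, ?_⟩
  exact Finset.disjoint_left.mpr fun j hj =>
    Finset.mem_compl.mp (Finset.mem_of_mem_erase (hSsub hj))

lemma exists_injective_forall_notMem {ι α : Type*} [Fintype ι] [Fintype α] (F : Finset α)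
    (h : Fintype.card ι + F.card ≤ Fintype.card α) :
    ∃ f : ι → α, Function.Injective f ∧ ∀ i, f i ∉ F := by
  have : Fintype.card ι ≤ Fintype.card {a // a ∉ F} := by
    rw [Fintype.card_subtype_compl, Fintype.card_coe]; omega
  obtain ⟨e⟩ := Function.Embedding.nonempty_of_card_le this
  exact ⟨fun i => e i, fun i j h => e.injective (Subtype.ext h), fun i => (e i).2⟩

lemma exists_treePlacement {n m : ℕ} (ℓ : Fin m → Fin n) (b : Fin m)
    {Q : Finset (Fin n × Fin m)} (hQ : Q.card + n + 2 * m ≤ n * m) :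
    ∃ φ : {u : List Bool // u ∈ (internalNodes m).erase []} → Fin n × Fin m,
      IsTreePlacement ℓ b φ ∧ ∀ u, φ u ∉ Q := by
  set column := Finset.univ.image fun i : Fin n => (i, b)
  set zeros := Finset.univ.image fun j : Fin m => (ℓ j, j)
  have hnodes : ((internalNodes m).erase []).card ≤ m - 1 :=
    Finset.card_erase_le.trans (card_internalNodes_le m)
  have hforbidden : (Q ∪ column ∪ zeros).card ≤ Q.card + n + m := by
    have := Finset.card_union_le (Q ∪ column) zeros
    have := Finset.card_union_le Q column
    have : column.card ≤ n := Finset.card_image_le.trans (by simp)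
    have : zeros.card ≤ m := Finset.card_image_le.trans (by simp)
    omega
  obtain ⟨φ, hφinj, hfree⟩ := exists_injective_forall_notMem (Q ∪ column ∪ zeros)
    (ι := {u : List Bool // u ∈ (internalNodes m).erase []})
    (by rw [Fintype.card_coe, Fintype.card_prod, Fintype.card_fin, Fintype.card_fin]; omega)
  refine ⟨φ, ⟨hφinj, fun u h => hfree u ?_, fun u j h => hfree u ?_⟩,
    fun u h => hfree u ?_⟩
  · exact Finset.mem_union_left _
      (Finset.mem_union_right _ (Finset.mem_image.mpr ⟨(φ u).1, by simp [← h]⟩))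
  · exact Finset.mem_union_right _ (Finset.mem_image.mpr ⟨j, by simp [h]⟩)
  · exact Finset.mem_union_left _ (Finset.mem_union_left _ h)

lemma card_zeroColumns_le {n m : ℕ} {β : Type} (ℓ : Fin m → Fin n)
    (Q : Finset (Fin n × Fin m)) :
    (Finset.univ.filter fun j => (ℓ j, j) ∈ Q).card ≤
      (Q.filter fun c => (xhard n m β ℓ c).val = false).card :=
  Finset.card_le_card_of_injOn (fun j => (ℓ j, j))
    (fun j hj =>
      Finset.mem_filter.mpr ⟨(Finset.mem_filter.mp hj).2, by simp [xhard, PSym.zero]⟩)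
    (fun _ _ _ _ h => congrArg Prod.snd h)

theorem statement5_general (n m : ℕ) (hm : 2 ≤ m)
    (T : DTree (Fin n × Fin m) (PSym n m (Fin n × Fin m)))
    (hT : T.Computes (gFun n m)) (ℓ : Fin m → Fin n) :
    m / 2 ≤ ((T.queryList (xhard n m (Fin n × Fin m) ℓ)).toFinset.filter
        fun c => (xhard n m (Fin n × Fin m) ℓ c).val = false).card ∨
      (n : ℤ) * ((m : ℤ) - 1) - 2 * m <
        ((T.queryList (xhard n m (Fin n × Fin m) ℓ)).toFinset.card : ℤ) := by
  set x := xhard n m (Fin n × Fin m) ℓ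
  set Q := (T.queryList x).toFinset
  by_contra! h
  obtain ⟨hzeros, hcard⟩ := h
  set Z := Finset.univ.filter fun j => (ℓ j, j) ∈ Q
  have hZ : Z.card < m / 2 := (card_zeroColumns_le ℓ Q).trans_lt hzeros
  obtain ⟨b, hbZ, S, hS, hbS, hSZ⟩ :=
    exists_notMem_subset_card_eq Z (k := m / 2) (by rw [Fintype.card_fin]; omega)
  obtain ⟨φ, hφ, hφQ⟩ := exists_treePlacement ℓ b (Q := Q) (by
    have : (n : ℤ) * (m - 1) = n * m - n := by ring
    omega)
  have hagree : ∀ c ∈ T.queryList x, plantedInput ℓ b φ S c = x c := by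
    intro c hc
    have hcQ : c ∈ Q := List.mem_toFinset.mpr hc
    have hzero {j : Fin m} (hj : c = (ℓ j, j)) : j ∈ Z :=
      Finset.mem_filter.mpr ⟨Finset.mem_univ j, hj ▸ hcQ⟩
    exact plantedInput_eq_xhard (fun h => hbZ (hzero h)) (fun u h => hφQ u (h ▸ hcQ))
      (fun j hj h => Finset.disjoint_left.mp hSZ hj (hzero h))
  have := T.eval_eq_of_forall_mem_queryList hagree
  rw [hT, hT, gFun_plantedInput hm hφ hbS hS, gFun_xhard] at this
  simp at this

/-- Any deterministic decision tree computing `g_{n,m}`, on any input `x^ℓ`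
of the hard distribution, either queries at least `m/2` cells with value 0, or queries more
than `n(m-1) - 2m` cells in total. -/
theorem statement5 (n m : ℕ) (hn : 2 ≤ n) (hm : 2 ≤ m) (hme : Even m)
    (T : DTree (Fin n × Fin m) (PSym n m (Fin n × Fin m)))
    (hT : T.Computes (gFun n m)) (ℓ : Fin m → Fin n) :
    m / 2 ≤ ((T.queryList (xhard n m (Fin n × Fin m) ℓ)).toFinset.filter
        fun c => (xhard n m (Fin n × Fin m) ℓ c).val = false).card ∨
      (n : ℤ) * ((m : ℤ) - 1) - 2 * m <
        ((T.queryList (xhard n m (Fin n × Fin m) ℓ)).toFinset.card : ℤ) :=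
  statement5_general n m hm T hT ℓ
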